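/- For any Hermitian operators $O_1, O_2$ and density operator $\sigma$ on a finite-dimensional Hilbert space, $|\mathrm{tr}(\sigma[O_1,O_2])|^2 \le \mathcal{F}_\sigma(O_1)\, V_\sigma(O_2)$, where $V_\sigma(O) = \mathrm{tr}(\sigma O^2) - (\mathrm{tr}(\sigma O))^2$ and $\mathcal{F}_\sigma(O_1) = \mathrm{tr}(\sigma L^2)$ with $L$ the symmetric logarithmic derivative satisfying $-i[O_1,\sigma] = (L\sigma + \sigma L)/2$. -/

import Mathlib

open Matrix
open scoped Kronecker ComplexOrder

variable {n m : Type*} [Fintype n] [DecidableEq n] [Fintype m] [DecidableEq m]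

open Classical in
/-- square root of a matrix (zero if not PSD) -/
noncomputable def msqrt (A : Matrix n n ℂ) : Matrix n n ℂ :=
  if h : A.PosSemidef then
    h.1.eigenvectorUnitary.1 * diagonal ((↑) ∘ (√·) ∘ h.1.eigenvalues) *
      (star h.1.eigenvectorUnitary : Matrix n n ℂ) else 0

/-- trace norm -/
noncomputable def traceNorm (X : Matrix n m ℂ) : ℝ :=
  ((msqrt (Xᴴ * X)).trace).re

def IsDensity (ρ : Matrix n n ℂ) : Prop := ρ.PosSemidef ∧ ρ.trace = 1

noncomputable def variance (σ A : Matrix n n ℂ) : ℝ :=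
  (Matrix.trace (σ * (A * A))).re - ((Matrix.trace (σ * A)).re) ^ 2

/-- `L` is a symmetric logarithmic derivative for `(σ, W)`. -/
def IsSLD (σ W L : Matrix n n ℂ) : Prop :=
  L.IsHermitian ∧ L * σ + σ * L = ((-2 : ℂ) * Complex.I) • (W * σ - σ * W)

/-- SLD Fisher information value associated with a given SLD `L`. -/
noncomputable def fisherVal (σ L : Matrix n n ℂ) : ℝ :=
  (Matrix.trace (σ * (L * L))).re

noncomputable def fidelity (ρ σ : Matrix n n ℂ) : ℝ :=
  ((msqrt (msqrt ρ * σ * msqrt ρ)).trace).re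

noncomputable def purifiedDist (ρ σ : Matrix n n ℂ) : ℝ :=
  Real.sqrt (1 - fidelity ρ σ ^ 2)

/-- completely positive -/
def IsCompletelyPositive (Φ : Matrix n n ℂ →ₗ[ℂ] Matrix m m ℂ) : Prop :=
  ∀ (k : ℕ) (M : Matrix (Fin k × n) (Fin k × n) ℂ), M.PosSemidef →
    (Matrix.of fun (p q : Fin k × m) => (Φ (Matrix.of fun i j => M (p.1, i) (q.1, j))) p.2 q.2).PosSemidef

def IsCPTP (Φ : Matrix n n ℂ →ₗ[ℂ] Matrix m m ℂ) : Prop :=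
  IsCompletelyPositive Φ ∧ ∀ X, (Φ X).trace = X.trace

/-- partial trace over the second factor -/
noncomputable def ptraceR {k r : Type*} [Fintype k] [Fintype r]
    (M : Matrix (k × r) (k × r) ℂ) : Matrix k k ℂ :=
  Matrix.of fun i j => ∑ a : r, M (i, a) (j, a)

/-! Cyclicity of the trace gives `tr(σ[O₁,O₂]) = tr([σ,O₁]O₂)`, and the SLD equation replaces
`[σ,O₁]` by `-(i/2)(Lσ + σL)`; as `σ`, `L`, `O₂` are Hermitian this makes
`tr(σ[O₁,O₂]) = -i Re tr(σ L O₂)`. Since `tr(σL) = 0`, `O₂` may be replaced by its centering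
`ΔO₂ = O₂ - tr(σO₂)`, and Cauchy–Schwarz for the semi-inner product `(X, Y) ↦ tr(σ Xᴴ Y)` bounds
`|tr(σ L ΔO₂)|²` by `tr(σL²) · tr(σ ΔO₂²)`, which is Fisher information times variance. -/

section
variable {ι : Type*} [Fintype ι]

theorem Matrix.PosSemidef.norm_trace_mul_conjTranspose_mul_sq_le {𝕜 : Type*} [RCLike 𝕜]
    {σ : Matrix ι ι 𝕜} (hσ : σ.PosSemidef) (A B : Matrix ι ι 𝕜) :
    ‖trace (σ * (Aᴴ * B))‖ ^ 2 ≤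
      RCLike.re (trace (σ * (Aᴴ * A))) * RCLike.re (trace (σ * (Bᴴ * B))) := by
  let := σ.toMatrixSeminormedAddCommGroup hσ
  let := σ.toMatrixInnerProductSpace hσ
  have hinner (X Y : Matrix ι ι 𝕜) : (inner 𝕜 X Y : 𝕜) = trace (σ * (Xᴴ * Y)) := by
    rw [trace_mul_comm, Matrix.mul_assoc, trace_mul_comm]; rfl
  have := inner_mul_inner_self_le (𝕜 := 𝕜) A B
  rwa [← inner_conj_symm B A, RCLike.norm_conj, ← sq, hinner, hinner, hinner] at this

theorem Matrix.IsHermitian.star_trace_mul_mul {R : Type*} [CommSemiring R] [StarRing R]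
    {σ A B : Matrix ι ι R} (hσ : σ.IsHermitian) (hA : A.IsHermitian) (hB : B.IsHermitian) :
    star (trace (σ * (A * B))) = trace (σ * (B * A)) := by
  rw [← trace_conjTranspose, conjTranspose_mul, conjTranspose_mul, hσ.eq, hA.eq, hB.eq,
    trace_mul_comm]

namespace IsSLD

variable {σ W L : Matrix ι ι ℂ}

theorem trace_mul_eq_zero (hL : IsSLD σ W L) : trace (σ * L) = 0 := by
  have h := congrArg trace hL.2
  rw [trace_add, trace_mul_comm L σ, trace_smul, trace_sub, trace_mul_comm W σ, sub_self,
    smul_zero] at h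
  linear_combination h / 2

theorem trace_mul_commutator (hσ : σ.IsHermitian) (hL : IsSLD σ W L) {A : Matrix ι ι ℂ}
    (hA : A.IsHermitian) :
    trace (σ * (W * A - A * W)) = -Complex.I * (trace (σ * (L * A))).re := by
  have hsym : trace ((L * σ + σ * L) * A) = 2 * (trace (σ * (L * A))).re := by
    have hconj := hσ.star_trace_mul_mul hL.1 hA
    rw [add_mul, trace_add, Matrix.mul_assoc, trace_mul_comm L, Matrix.mul_assoc,
      Matrix.mul_assoc, ← hconj, Complex.star_def, add_comm, Complex.add_conj]
    push_cast; ring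
  have h := congrArg (fun M => trace (M * A)) hL.2
  simp only [smul_mul, trace_smul, sub_mul, trace_sub, Matrix.mul_assoc, smul_eq_mul] at h
  rw [Matrix.mul_sub, trace_sub, ← Matrix.mul_assoc σ A W, trace_mul_comm (σ * A) W]
  linear_combination (Complex.I / 2) * (hsym.symm.trans h) +
    (trace (σ * (W * A)) - trace (W * (σ * A))) * Complex.I_sq

end IsSLD

variable [DecidableEq ι]

def centered (σ A : Matrix ι ι ℂ) : Matrix ι ι ℂ :=
  A - ((trace (σ * A)).re : ℂ) • 1

theorem Matrix.IsHermitian.centered {A : Matrix ι ι ℂ} (hA : A.IsHermitian) (σ : Matrix ι ι ℂ) :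
    (centered σ A).IsHermitian :=
  hA.sub (isHermitian_one.smul (Complex.conj_ofReal _))

theorem variance_eq_re_trace_mul_centered_mul_centered {σ : Matrix ι ι ℂ} (hσ : σ.trace = 1)
    (A : Matrix ι ι ℂ) :
    variance σ A = (trace (σ * (centered σ A * centered σ A))).re := by
  set μ : ℂ := ((trace (σ * A)).re : ℂ)
  have : σ * (centered σ A * centered σ A) = σ * (A * A) - (2 * μ) • (σ * A) + (μ * μ) • σ := by
    simp only [centered, Matrix.mul_sub, Matrix.sub_mul, Matrix.smul_mul, Matrix.mul_smul,
      Matrix.mul_one, Matrix.one_mul]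
    module
  simp only [variance, this, trace_add, trace_sub, trace_smul, smul_eq_mul, hσ, mul_one,
    Complex.add_re, Complex.sub_re, Complex.mul_re, Complex.re_ofNat, Complex.ofReal_re,
    Complex.im_ofNat, Complex.ofReal_im, mul_zero, sub_zero, Complex.mul_im, zero_mul, add_zero, μ]
  ring

theorem IsSLD.trace_mul_mul_centered {σ W L : Matrix ι ι ℂ} (hL : IsSLD σ W L)
    (A : Matrix ι ι ℂ) :
    trace (σ * (L * centered σ A)) = trace (σ * (L * A)) := by
  rw [centered, Matrix.mul_sub, Matrix.mul_smul, Matrix.mul_one, Matrix.mul_sub, Matrix.mul_smul,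
    trace_sub, trace_smul, hL.trace_mul_eq_zero, smul_zero, sub_zero]

end

theorem robertson_fisher_general (σ O1 O2 L : Matrix n n ℂ) (hσ : IsDensity σ)
    (h2 : O2.IsHermitian) (hL : IsSLD σ O1 L) :
    ‖Matrix.trace (σ * (O1 * O2 - O2 * O1))‖ ^ 2 ≤
      fisherVal σ L * variance σ O2 := by
  calc ‖trace (σ * (O1 * O2 - O2 * O1))‖ ^ 2
      = (trace (σ * (L * centered σ O2))).re ^ 2 := by
        rw [hL.trace_mul_commutator hσ.1.1 h2, hL.trace_mul_mul_centered, norm_mul, norm_neg,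
          Complex.norm_I, one_mul, Complex.norm_real, Real.norm_eq_abs, sq_abs]
    _ ≤ ‖trace (σ * (L * centered σ O2))‖ ^ 2 := by
        rw [← sq_abs]; gcongr; exact Complex.abs_re_le_norm _
    _ ≤ fisherVal σ L * variance σ O2 := by
        have := hσ.1.norm_trace_mul_conjTranspose_mul_sq_le L (centered σ O2)
        rw [hL.1.eq, (h2.centered σ).eq] at this
        rwa [fisherVal, variance_eq_re_trace_mul_centered_mul_centered hσ.2]

/-- Improved Robertson uncertainty relation with SLD Fisher information. -/
theorem robertson_fisher (σ O1 O2 L : Matrix n n ℂ) (hσ : IsDensity σ)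
    (h1 : O1.IsHermitian) (h2 : O2.IsHermitian) (hL : IsSLD σ O1 L) :
    ‖Matrix.trace (σ * (O1 * O2 - O2 * O1))‖ ^ 2 ≤
      fisherVal σ L * variance σ O2 :=
  robertson_fisher_general σ O1 O2 L hσ h2 hL
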